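/- arXiv:2106.09829 — 6 statements merged into one kernel-verified Lean document; each statement's English description precedes it below -/
import Mathlib

section
/- Let G be a finite connected simple graph of order n ≥ 2 and size m. Then the independence number of the subdivision graph S(G) satisfies α(S(G)) = max{n, m}. -/
/-- The subdivision graph `S(G)`: vertices are `V(G) ⊕ E(G)`, with `v ∈ V(G)` adjacent to
`e ∈ E(G)` iff `v` is an endpoint of `e`. -/
def subdivision {V : Type*} (G : SimpleGraph V) : SimpleGraph (V ⊕ G.edgeSet) where
  Adj a b :=
    match a, b with
    | Sum.inl v, Sum.inr e => v ∈ (e : Sym2 V)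
    | Sum.inr e, Sum.inl v => v ∈ (e : Sym2 V)
    | _, _ => False
  symm := ⟨by rintro (v | e) (w | f) h <;> simp_all⟩
  loopless := ⟨by rintro (v | e) h <;> simp_all⟩

/-!
Two independent sets of `S(G)` of sizes `n` and `m` are obvious: all of `V(G)`, and all of `E(G)`.
Conversely, let `I` be independent with vertex part `A` and edge part `B`. If `B = ∅` then
`|I| ≤ n`. Otherwise root `G` at an endpoint `r` of an edge of `B` and send every `a ≠ r` to the
first edge of a shortest path from `a` to `r`. Distinct vertices get distinct edges (the distance
to `r` drops along each chosen edge), the root is not in `A`, and the edge chosen for `a ∈ A`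
contains `a`, so it is not in `B`. Hence `|A| + |B| ≤ m`.
-/

namespace SimpleGraph

variable {V : Type*} {G : SimpleGraph V}

theorem Reachable.exists_adj_dist_lt {a r : V} (h : G.Reachable a r) (ha : a ≠ r) :
    ∃ x, G.Adj a x ∧ G.dist x r < G.dist a r := by
  obtain ⟨p, hp⟩ := h.exists_walk_length_eq_dist
  cases p with
  | nil => exact absurd rfl ha
  | @cons _ x _ hadj q =>
    refine ⟨x, hadj, ?_⟩
    rw [← hp, Walk.length_cons]
    exact Nat.lt_succ_of_le (dist_le q)

theorem Connected.ncard_add_ncard_le_ncard_edgeSet [Finite V] (hconn : G.Connected)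
    {A : Set V} {B : Set (Sym2 V)} (hBE : B ⊆ G.edgeSet) (hB : B.Nonempty)
    (hAB : ∀ a ∈ A, ∀ e ∈ B, a ∉ e) : A.ncard + B.ncard ≤ G.edgeSet.ncard := by
  obtain ⟨e₀, he₀⟩ := hB
  obtain ⟨r, hr⟩ : ∃ r, r ∈ e₀ := e₀.inductionOn fun x _ => ⟨x, Sym2.mem_mk_left _ _⟩
  have hrA : r ∉ A := fun hrA => hAB r hrA e₀ he₀ hr
  choose next hnext using fun a : A => (hconn _ _).exists_adj_dist_lt (ne_of_mem_of_not_mem a.2 hrA)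
  let step : A → Sym2 V := fun a => s(a, next a)
  have hstep_inj : Function.Injective step := by
    intro a b hab
    rcases Sym2.eq_iff.mp hab with ⟨hab, -⟩ | ⟨ha, hb⟩
    · exact Subtype.ext hab
    · have h₁ := (hnext a).2
      have h₂ := (hnext b).2
      rw [hb] at h₁
      rw [← ha] at h₂
      omega
  have hdisj : Disjoint (Set.range step) B := by
    rw [Set.disjoint_left]
    rintro _ ⟨a, rfl⟩ ha
    exact hAB a a.2 _ ha (Sym2.mem_mk_left _ _)
  have hsub : Set.range step ∪ B ⊆ G.edgeSet :=
    Set.union_subset (Set.range_subset_iff.mpr fun a => (hnext a).1) hBE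
  calc A.ncard + B.ncard = (Set.range step).ncard + B.ncard := by
        rw [Set.ncard_range_of_injective hstep_inj, Nat.card_coe_set_eq]
    _ = (Set.range step ∪ B).ncard := (Set.ncard_union_eq hdisj).symm
    _ ≤ G.edgeSet.ncard := Set.ncard_le_ncard hsub

end SimpleGraph

theorem Set.ncard_preimage_inl_add_ncard_preimage_inr {α β : Type*} {s : Set (α ⊕ β)}
    (hs : s.Finite) : (Sum.inl ⁻¹' s).ncard + (Sum.inr ⁻¹' s).ncard = s.ncard := by
  conv_rhs => rw [← Set.image_preimage_inl_union_image_preimage_inr s]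
  rw [Set.ncard_union_eq Set.disjoint_image_inl_image_inr
      (hs.subset (Set.image_preimage_subset _ _)) (hs.subset (Set.image_preimage_subset _ _)),
    Set.ncard_image_of_injective _ Sum.inl_injective,
    Set.ncard_image_of_injective _ Sum.inr_injective]

section subdivision

variable {V : Type*} (G : SimpleGraph V)

theorem subdivision_adj_inl_inr {v : V} {e : G.edgeSet} :
    (subdivision G).Adj (Sum.inl v) (Sum.inr e) ↔ v ∈ (e : Sym2 V) :=
  Iff.rfl

theorem subdivision_not_adj_range_inl {a b : V ⊕ G.edgeSet} (ha : a ∈ Set.range Sum.inl)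
    (hb : b ∈ Set.range Sum.inl) : ¬ (subdivision G).Adj a b := by
  obtain ⟨v, rfl⟩ := ha
  obtain ⟨w, rfl⟩ := hb
  exact id

theorem subdivision_not_adj_range_inr {a b : V ⊕ G.edgeSet} (ha : a ∈ Set.range Sum.inr)
    (hb : b ∈ Set.range Sum.inr) : ¬ (subdivision G).Adj a b := by
  obtain ⟨e, rfl⟩ := ha
  obtain ⟨f, rfl⟩ := hb
  exact id

theorem ncard_le_max_of_forall_not_subdivision_adj [Finite V] (hconn : G.Connected)
    {I : Set (V ⊕ G.edgeSet)} (hI : ∀ a ∈ I, ∀ b ∈ I, ¬ (subdivision G).Adj a b) :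
    I.ncard ≤ max (Nat.card V) G.edgeSet.ncard := by
  rw [← Set.ncard_preimage_inl_add_ncard_preimage_inr I.toFinite]
  rcases (Sum.inr ⁻¹' I).eq_empty_or_nonempty with hB | hB
  · rw [hB, Set.ncard_empty, add_zero]
    exact (Set.ncard_le_card _).trans (le_max_left _ _)
  · refine le_max_of_le_right ?_
    rw [← Set.ncard_image_of_injective _ Subtype.val_injective]
    refine hconn.ncard_add_ncard_le_ncard_edgeSet (by simp) (hB.image _) ?_
    rintro a ha _ ⟨e, he, rfl⟩ hae
    exact hI _ ha _ he ((subdivision_adj_inl_inr G).mpr hae)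

end subdivision

theorem indepNum_subdivision_general {V : Type*} [Fintype V] (G : SimpleGraph V)
    (hconn : G.Connected) :
    IsGreatest {k : ℕ | ∃ I : Set (V ⊕ G.edgeSet),
        (∀ a ∈ I, ∀ b ∈ I, ¬ (subdivision G).Adj a b) ∧ I.ncard = k}
      (max (Fintype.card V) G.edgeSet.ncard) := by
  rw [← Nat.card_eq_fintype_card]
  refine ⟨?_, fun k ⟨I, hI, hk⟩ => hk ▸ ncard_le_max_of_forall_not_subdivision_adj G hconn hI⟩
  rcases le_total (Nat.card V) G.edgeSet.ncard with h | h
  · rw [max_eq_right h]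
    refine ⟨Set.range Sum.inr, fun a ha b hb => subdivision_not_adj_range_inr G ha hb, ?_⟩
    rw [Set.ncard_range_of_injective Sum.inr_injective, Nat.card_coe_set_eq]
  · rw [max_eq_left h]
    exact ⟨Set.range Sum.inl, fun a ha b hb => subdivision_not_adj_range_inl G ha hb,
      Set.ncard_range_of_injective Sum.inl_injective⟩

/-- For a finite connected simple graph `G` of order `n ≥ 2` and size `m`,
`α(S(G)) = max {n, m}`, i.e. `max {n, m}` is the greatest cardinality of an independent set
of `S(G)`. -/
theorem indepNum_subdivision {V : Type*} [Fintype V] (G : SimpleGraph V)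
    (hconn : G.Connected) (hn : 2 ≤ Fintype.card V) :
    IsGreatest {k : ℕ | ∃ I : Set (V ⊕ G.edgeSet),
        (∀ a ∈ I, ∀ b ∈ I, ¬ (subdivision G).Adj a b) ∧ I.ncard = k}
      (max (Fintype.card V) G.edgeSet.ncard) :=
  indepNum_subdivision_general G hconn
end

section
/- Let G be a finite connected simple graph of order n ≥ 2 and size m. Then the vertex-covering number of the subdivision graph S(G) satisfies τ(S(G)) = min{n, m}. -/
open Function

namespace SimpleGraph

variable {V : Type*} {G : SimpleGraph V}

theorem IsVertexCover.card_le_ncard_of_disjoint_edges {W ι : Type*} {H : SimpleGraph W}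
    {C : Set W} (hC : H.IsVertexCover C) (hfin : C.Finite) {a b : ι → W} (ha : Injective a)
    (hb : Injective b) (hdisj : ∀ i j, a i ≠ b j) (hadj : ∀ i, H.Adj (a i) (b i)) :
    Nat.card ι ≤ C.ncard := by
  have : Finite C := hfin
  classical
  let pick : ι → C := fun i =>
    if h : a i ∈ C then ⟨a i, h⟩ else ⟨b i, (hC (hadj i)).resolve_left h⟩
  have hpick : Injective pick := by
    intro i j hij
    simp only [pick, Subtype.ext_iff] at hij
    split_ifs at hij
    exacts [ha hij, absurd hij (hdisj i j), absurd hij.symm (hdisj j i), hb hij]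
  exact (Nat.card_le_card_of_injective pick hpick).trans_eq (Nat.card_coe_set_eq C)

theorem Connected.exists_adj_dist_add_one_eq (hG : G.Connected) {v r : V} (hv : v ≠ r) :
    ∃ w, G.Adj v w ∧ G.dist w r + 1 = G.dist v r := by
  obtain ⟨p, hp⟩ := hG.exists_walk_length_eq_dist v r
  cases p with
  | nil => exact absurd rfl hv
  | @cons _ w _ hvw q =>
    refine ⟨w, hvw, le_antisymm ?_ ?_⟩
    · simpa [← hp] using dist_le q
    · have := hG.dist_triangle (u := v) (v := w) (w := r)
      rwa [dist_eq_one_iff_adj.2 hvw, add_comm] at this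

/-- Distances to `r` strictly decrease along the chosen edges, so no edge is chosen twice. -/
theorem Connected.exists_injective_mem_edgeSet_of_ne (hG : G.Connected) (r : V) :
    ∃ p : {v // v ≠ r} → G.edgeSet, Injective p ∧ ∀ v, (v : V) ∈ (p v : Sym2 V) := by
  choose parent hadj hdist using fun v : {v // v ≠ r} => hG.exists_adj_dist_add_one_eq v.2
  refine ⟨fun v => ⟨s(v, parent v), hadj v⟩, fun v w hvw => ?_, fun v => Sym2.mem_mk_left _ _⟩
  rcases Sym2.eq_iff.1 (congrArg Subtype.val hvw) with ⟨h, -⟩ | ⟨hv, hw⟩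
  · exact Subtype.ext h
  · have hv' := hdist v
    have hw' := hdist w
    rw [hw] at hv'
    rw [← hv] at hw'
    omega

theorem Connected.exists_injective_mem_edgeSet [Finite V] (hG : G.Connected)
    (hcard : Nat.card V ≤ Nat.card G.edgeSet) :
    ∃ f : V → G.edgeSet, Injective f ∧ ∀ v, v ∈ (f v : Sym2 V) := by
  obtain ⟨T, hTG, hT⟩ := hG.exists_isTree_le
  obtain ⟨e, heG, heT⟩ : ∃ e ∈ G.edgeSet, e ∉ T.edgeSet := by
    by_contra! h
    have := Nat.card_mono (Set.toFinite _) h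
    have := (isTree_iff_connected_and_card.1 hT).2
    omega
  obtain ⟨p, hp, hpmem⟩ := hT.connected.exists_injective_mem_edgeSet_of_ne e.out.1
  classical
  refine ⟨fun v => if h : v = e.out.1 then ⟨e, heG⟩
    else ⟨p ⟨v, h⟩, edgeSet_mono hTG (p ⟨v, h⟩).2⟩, fun v w hvw => ?_, fun v => ?_⟩
  · have hpe : ∀ v, (p v : Sym2 V) ≠ e := fun v h => heT (h ▸ (p v).2)
    by_cases hv : v = e.out.1 <;> by_cases hw : w = e.out.1 <;>
      simp only [hv, hw, dite_true, dite_false, Subtype.mk.injEq] at hvw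
    · rw [hv, hw]
    · exact absurd hvw.symm (hpe _)
    · exact absurd hvw (hpe _)
    · exact congrArg Subtype.val (hp (Subtype.ext hvw))
  · by_cases hv : v = e.out.1
    · simpa [hv] using Sym2.out_fst_mem e
    · simpa [hv] using hpmem ⟨v, hv⟩

end SimpleGraph

open SimpleGraph

theorem isVertexCover_subdivision_range_inl {V : Type*} (G : SimpleGraph V) :
    (subdivision G).IsVertexCover (Set.range Sum.inl) := by
  rintro (v | e) (w | e') hadj
  exacts [hadj.elim, .inl ⟨v, rfl⟩, .inr ⟨w, rfl⟩, hadj.elim]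

theorem isVertexCover_subdivision_range_inr {V : Type*} (G : SimpleGraph V) :
    (subdivision G).IsVertexCover (Set.range Sum.inr) := by
  rintro (v | e) (w | e') hadj
  exacts [hadj.elim, .inr ⟨e', rfl⟩, .inl ⟨e, rfl⟩, hadj.elim]

theorem vertexCoverNum_subdivision_general {V : Type*} [Fintype V] (G : SimpleGraph V)
    (hconn : G.Connected) :
    IsLeast {k : ℕ | ∃ C : Set (V ⊕ G.edgeSet),
        (∀ a b, (subdivision G).Adj a b → a ∈ C ∨ b ∈ C) ∧ C.ncard = k}
      (min (Fintype.card V) G.edgeSet.ncard) := by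
  refine ⟨?_, ?_⟩
  · rcases le_total (Fintype.card V) G.edgeSet.ncard with h | h
    · refine ⟨_, isVertexCover_subdivision_range_inl G, ?_⟩
      rw [Set.ncard_range_of_injective Sum.inl_injective, Nat.card_eq_fintype_card, min_eq_left h]
    · refine ⟨_, isVertexCover_subdivision_range_inr G, ?_⟩
      rw [Set.ncard_range_of_injective Sum.inr_injective, Nat.card_coe_set_eq, min_eq_right h]
  · rintro _ ⟨C, hC, rfl⟩
    have hcover : (subdivision G).IsVertexCover C := hC
    rw [← Nat.card_eq_fintype_card, ← Nat.card_coe_set_eq G.edgeSet]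
    rcases le_or_gt (Nat.card V) (Nat.card G.edgeSet) with h | h
    · obtain ⟨f, hf, hfmem⟩ := hconn.exists_injective_mem_edgeSet h
      exact (min_le_left _ _).trans <| hcover.card_le_ncard_of_disjoint_edges C.toFinite
        Sum.inl_injective (Sum.inr_injective.comp hf) (fun _ _ => Sum.inl_ne_inr) hfmem
    · obtain ⟨r⟩ := hconn.nonempty
      obtain ⟨p, hp, hpmem⟩ := hconn.exists_injective_mem_edgeSet_of_ne r
      have hmatch := hcover.card_le_ncard_of_disjoint_edges C.toFinite
        (Sum.inl_injective.comp Subtype.val_injective) (Sum.inr_injective.comp hp)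
        (fun _ _ => Sum.inl_ne_inr) hpmem
      have hcard : Nat.card {v // v ≠ r} = Nat.card V - 1 := by
        classical
        rw [Nat.card_eq_fintype_card, Fintype.card_subtype_compl, Fintype.card_subtype_eq,
          Nat.card_eq_fintype_card]
      have := hconn.card_vert_le_card_edgeSet_add_one
      omega

/-- For a finite connected simple graph `G` of order `n ≥ 2` and size `m`,
`τ(S(G)) = min {n, m}`, i.e. `min {n, m}` is the least cardinality of a vertex cover
of `S(G)`. -/
theorem vertexCoverNum_subdivision {V : Type*} [Fintype V] (G : SimpleGraph V)
    (hconn : G.Connected) (hn : 2 ≤ Fintype.card V) :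
    IsLeast {k : ℕ | ∃ C : Set (V ⊕ G.edgeSet),
        (∀ a b, (subdivision G).Adj a b → a ∈ C ∨ b ∈ C) ∧ C.ncard = k}
      (min (Fintype.card V) G.edgeSet.ncard) :=
  vertexCoverNum_subdivision_general G hconn
end

section
/- Let G be a finite connected simple graph of order n ≥ 2 and size m, with subdivision graph S(G), and let V denote the set of vertices of S(G) coming from V(G) and S the set of vertices of S(G) coming from E(G). The following statements are equivalent: (i) G contains at least one cycle; (ii) α(S(G)) = |S| = m; (iii) τ(S(G)) = |V| = n. -/
/-- A subgraph `H` of `G` is a cycle if it is connected (in particular nonempty) and every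
vertex of `H` has exactly two neighbours in `H`; for finite graphs this characterizes the
cycle graphs. -/
def SimpleGraph.Subgraph.IsCycleSubgraph {V : Type*} {G : SimpleGraph V}
    (H : G.Subgraph) : Prop :=
  H.coe.Connected ∧ ∀ v ∈ H.verts, (H.neighborSet v).ncard = 2

theorem Set.ncard_eq_ncard_preimage_inl_add_ncard_preimage_inr {α β : Type*} [Finite α] [Finite β]
    (I : Set (α ⊕ β)) : I.ncard = (Sum.inl ⁻¹' I).ncard + (Sum.inr ⁻¹' I).ncard := by
  conv_lhs => rw [← image_preimage_inl_union_image_preimage_inr I]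
  rw [ncard_union_eq disjoint_image_inl_image_inr,
    ncard_image_of_injective _ Sum.inl_injective,
    ncard_image_of_injective _ Sum.inr_injective]

namespace SimpleGraph

variable {W : Type*} (H : SimpleGraph W)

def indepSetSizes : Set ℕ := {k | ∃ I, H.IsIndepSet I ∧ I.ncard = k}

def vertexCoverSizes : Set ℕ := {k | ∃ C, H.IsVertexCover C ∧ C.ncard = k}

variable {H}

theorem isIndepSet_iff_forall_not_adj {I : Set W} :
    H.IsIndepSet I ↔ ∀ a ∈ I, ∀ b ∈ I, ¬ H.Adj a b :=
  ⟨fun h _ ha _ hb hab => h ha hb hab.ne hab, fun h a ha b hb _ => h a ha b hb⟩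

theorem isLeast_vertexCoverSizes_iff [Finite W] {a b : ℕ} (hab : a + b = Nat.card W) :
    IsLeast H.vertexCoverSizes a ↔ IsGreatest H.indepSetSizes b := by
  have hcompl (S : Set W) : S.ncard + Sᶜ.ncard = Nat.card W := Set.ncard_add_ncard_compl S
  constructor
  · rintro ⟨⟨C, hC, rfl⟩, hmin⟩
    have hC' := hcompl C
    refine ⟨⟨Cᶜ, isIndepSet_compl_iff_isVertexCover.mpr hC, by lia⟩, ?_⟩
    rintro _ ⟨I, hI, rfl⟩
    have := hmin ⟨Iᶜ, isVertexCover_compl.mpr hI, rfl⟩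
    have := hcompl I
    lia
  · rintro ⟨⟨I, hI, rfl⟩, hmax⟩
    have hI' := hcompl I
    refine ⟨⟨Iᶜ, isVertexCover_compl.mpr hI, by lia⟩, ?_⟩
    rintro _ ⟨C, hC, rfl⟩
    have := hmax ⟨Cᶜ, isIndepSet_compl_iff_isVertexCover.mpr hC, rfl⟩
    have := hcompl C
    lia

variable {V : Type*} {G : SimpleGraph V}

theorem Connected.exists_adj_dist_lt (hconn : G.Connected) {v r : V} (hv : v ≠ r) :
    ∃ w, G.Adj v w ∧ G.dist w r < G.dist v r := by
  obtain ⟨p, hp⟩ := hconn.exists_walk_length_eq_dist v r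
  cases p with
  | nil => exact absurd rfl hv
  | cons h q =>
    refine ⟨_, h, ?_⟩
    have := dist_le q
    rw [← hp, Walk.length_cons]
    lia

theorem Connected.exists_injOn_incident_edge (hconn : G.Connected) (r : V) :
    ∃ f : V → Sym2 V, (∀ v ≠ r, f v ∈ G.edgeSet ∧ v ∈ f v) ∧ Set.InjOn f {r}ᶜ := by
  have (v : V) : ∃ w, v ≠ r → G.Adj v w ∧ G.dist w r < G.dist v r := by
    by_cases hv : v = r
    · exact ⟨v, fun h => absurd hv h⟩
    · obtain ⟨w, hw⟩ := hconn.exists_adj_dist_lt hv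
      exact ⟨w, fun _ => hw⟩
  choose parent hparent using this
  refine ⟨fun v => s(v, parent v), fun v hv => ⟨(hparent v hv).1, Sym2.mem_mk_left _ _⟩, ?_⟩
  intro x hx y hy hxy
  rcases Sym2.eq_iff.mp hxy with ⟨h, -⟩ | ⟨hxp, hyp⟩
  · exact h
  · -- `x` and `y` would each be strictly closer to `r` than the other
    have hx' := (hparent x hx).2
    have hy' := (hparent y hy).2
    rw [hyp] at hx'
    rw [← hxp] at hy'
    lia

theorem Connected.not_isAcyclic_iff [Finite V] (hconn : G.Connected) :
    ¬ G.IsAcyclic ↔ Nat.card V ≤ G.edgeSet.ncard := by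
  have hle := hconn.card_vert_le_card_edgeSet_add_one
  have htree : G.IsAcyclic ↔ Nat.card G.edgeSet + 1 = Nat.card V := by
    rw [← isTree_iff_connected_and_card.trans (and_iff_right hconn)]
    exact ⟨fun h => ⟨hconn, h⟩, IsTree.isAcyclic⟩
  rw [htree, ← Nat.card_coe_set_eq]
  lia

theorem Subgraph.IsCycleSubgraph.spanningCoe_isCycles {H : G.Subgraph}
    (hH : H.IsCycleSubgraph) : H.spanningCoe.IsCycles := fun _ ⟨_, hvw⟩ =>
  hH.2 _ (H.edge_vert hvw)

theorem exists_isCycleSubgraph_iff_not_isAcyclic [Finite V] :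
    (∃ H : G.Subgraph, H.IsCycleSubgraph) ↔ ¬ G.IsAcyclic := by
  constructor
  · rintro ⟨H, hH⟩ hacyc
    obtain ⟨⟨v, hv⟩⟩ := hH.1.nonempty
    have hnbr : (H.spanningCoe.neighborSet v).Nonempty :=
      Set.nonempty_of_ncard_ne_zero (s := H.neighborSet v) (by rw [hH.2 v hv]; lia)
    obtain ⟨c, hc, -⟩ :=
      hH.spanningCoe_isCycles.exists_cycle_toSubgraph_verts_eq_connectedComponentSupp rfl hnbr
    exact hacyc _ (hc.mapLe H.spanningCoe_le)
  · intro h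
    simp only [IsAcyclic, not_forall, not_not] at h
    obtain ⟨u, c, hc⟩ := h
    exact ⟨c.toSubgraph, c.toSubgraph_connected.coe,
      fun v hv => hc.ncard_neighborSet_toSubgraph_eq_two (c.mem_verts_toSubgraph.mp hv)⟩

end SimpleGraph

open SimpleGraph

section Subdivision

variable {V : Type*} {G : SimpleGraph V}

theorem subdivision_isIndepSet_range_inl : (subdivision G).IsIndepSet (Set.range Sum.inl) := by
  rintro _ ⟨v, rfl⟩ _ ⟨w, rfl⟩ _ h
  exact h

theorem subdivision_isIndepSet_range_inr : (subdivision G).IsIndepSet (Set.range Sum.inr) := by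
  rintro _ ⟨e, rfl⟩ _ ⟨f, rfl⟩ _ h
  exact h

variable [Finite V]

theorem ncard_preimage_inl_add_ncard_preimage_inr_le (hconn : G.Connected)
    {I : Set (V ⊕ G.edgeSet)} (hI : (subdivision G).IsIndepSet I) {r : V}
    (hr : Sum.inl r ∉ I) : (Sum.inl ⁻¹' I).ncard + (Sum.inr ⁻¹' I).ncard ≤ G.edgeSet.ncard := by
  obtain ⟨f, hf, hinj⟩ := hconn.exists_injOn_incident_edge r
  set A := Sum.inl ⁻¹' I
  set B := Subtype.val '' (Sum.inr ⁻¹' I : Set G.edgeSet)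
  have hA : A ⊆ {r}ᶜ := fun v hv hvr => hr (hvr ▸ hv)
  have hmaps : ∀ v ∈ A, f v ∈ G.edgeSet \ B := by
    intro v hv
    refine ⟨(hf v (hA hv)).1, ?_⟩
    rintro ⟨e, he, hev⟩
    exact hI hv he Sum.inl_ne_inr (show v ∈ (e : Sym2 V) from hev ▸ (hf v (hA hv)).2)
  have hAle := Set.ncard_le_ncard_of_injOn f hmaps (hinj.mono hA)
  have hBE : B ⊆ G.edgeSet := by
    rintro _ ⟨e, -, rfl⟩
    exact e.2
  have hsplit := Set.ncard_sdiff_add_ncard_of_subset hBE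
  rw [Set.ncard_image_of_injective _ Subtype.val_injective] at hsplit
  lia

theorem ncard_le_of_isIndepSet_subdivision (hconn : G.Connected)
    (hnm : Nat.card V ≤ G.edgeSet.ncard) {I : Set (V ⊕ G.edgeSet)}
    (hI : (subdivision G).IsIndepSet I) : I.ncard ≤ G.edgeSet.ncard := by
  rw [Set.ncard_eq_ncard_preimage_inl_add_ncard_preimage_inr I]
  by_cases hV : Sum.inl ⁻¹' I = Set.univ
  · have hE : Sum.inr ⁻¹' I = ∅ := by
      refine Set.eq_empty_of_forall_notMem fun e he => ?_
      have hv : Sum.inl (e : Sym2 V).out.1 ∈ I := show _ ∈ Sum.inl ⁻¹' I from hV ▸ Set.mem_univ _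
      exact hI hv he Sum.inl_ne_inr (Sym2.out_fst_mem _)
    simpa [hV, hE] using hnm
  · obtain ⟨r, hr⟩ := (Set.ne_univ_iff_exists_notMem _).mp hV
    exact ncard_preimage_inl_add_ncard_preimage_inr_le hconn hI hr

theorem isGreatest_indepSetSizes_subdivision_iff (hconn : G.Connected) :
    IsGreatest (subdivision G).indepSetSizes G.edgeSet.ncard ↔
      Nat.card V ≤ G.edgeSet.ncard := by
  constructor
  · rintro ⟨-, hmax⟩
    have := hmax ⟨_, subdivision_isIndepSet_range_inl, rfl⟩
    rwa [Set.ncard_range_of_injective Sum.inl_injective] at this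
  · intro hnm
    refine ⟨⟨_, subdivision_isIndepSet_range_inr, ?_⟩, ?_⟩
    · rw [Set.ncard_range_of_injective Sum.inr_injective, Nat.card_coe_set_eq]
    · rintro _ ⟨I, hI, rfl⟩
      exact ncard_le_of_isIndepSet_subdivision hconn hnm hI

end Subdivision

theorem atLeastOneCycle_tfae_general {V : Type*} [Fintype V] (G : SimpleGraph V)
    (hconn : G.Connected) :
    List.TFAE
      [ ∃ H : G.Subgraph, H.IsCycleSubgraph,
        IsGreatest {k : ℕ | ∃ I : Set (V ⊕ G.edgeSet),
            (∀ a ∈ I, ∀ b ∈ I, ¬ (subdivision G).Adj a b) ∧ I.ncard = k}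
          G.edgeSet.ncard,
        IsLeast {k : ℕ | ∃ C : Set (V ⊕ G.edgeSet),
            (∀ a b, (subdivision G).Adj a b → a ∈ C ∨ b ∈ C) ∧ C.ncard = k}
          (Fintype.card V) ] := by
  have hindep : {k : ℕ | ∃ I : Set (V ⊕ G.edgeSet),
      (∀ a ∈ I, ∀ b ∈ I, ¬ (subdivision G).Adj a b) ∧ I.ncard = k} =
        (subdivision G).indepSetSizes := by
    simp only [indepSetSizes, isIndepSet_iff_forall_not_adj]
  have hcard : Fintype.card V + G.edgeSet.ncard = Nat.card (V ⊕ G.edgeSet) := by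
    rw [Nat.card_sum, Nat.card_eq_fintype_card, Nat.card_coe_set_eq]
  rw [hindep]
  tfae_have 1 ↔ 2 := by
    rw [exists_isCycleSubgraph_iff_not_isAcyclic, hconn.not_isAcyclic_iff,
      isGreatest_indepSetSizes_subdivision_iff hconn, Nat.card_eq_fintype_card]
  tfae_have 3 ↔ 2 := isLeast_vertexCoverSizes_iff hcard
  tfae_finish

/-- For a finite connected simple graph `G` of order `n ≥ 2` and size `m`,
the following are equivalent: (i) `G` contains at least one cycle;
(ii) `α(S(G)) = |S| = m`; (iii) `τ(S(G)) = |V| = n`. -/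
theorem atLeastOneCycle_tfae {V : Type*} [Fintype V] (G : SimpleGraph V)
    (hconn : G.Connected) (hn : 2 ≤ Fintype.card V) :
    List.TFAE
      [ ∃ H : G.Subgraph, H.IsCycleSubgraph,
        IsGreatest {k : ℕ | ∃ I : Set (V ⊕ G.edgeSet),
            (∀ a ∈ I, ∀ b ∈ I, ¬ (subdivision G).Adj a b) ∧ I.ncard = k}
          G.edgeSet.ncard,
        IsLeast {k : ℕ | ∃ C : Set (V ⊕ G.edgeSet),
            (∀ a b, (subdivision G).Adj a b → a ∈ C ∨ b ∈ C) ∧ C.ncard = k}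
          (Fintype.card V) ] :=
  atLeastOneCycle_tfae_general G hconn
end

section
/- Let G be a finite connected simple graph of order n ≥ 2 and size m, with subdivision graph S(G), and let V denote the set of vertices of S(G) coming from V(G) and S the set of vertices of S(G) coming from E(G). The following statements are equivalent: (i) G contains at most one cycle; (ii) β(S(G)) = |S| = m; (iii) ρ(S(G)) = |V| = n. -/
/-!
Both `β(S(G)) = m` and `ρ(S(G)) = n` say that the edges of `G` have a system of distinct
representatives among their endpoints: a matching of `S(G)` of size `m` pairs every edge with its
own endpoint, and an edge cover of `S(G)` of size `n` is the graph of a map from the vertices onto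
the edges, any section of which is such a system. For connected `G` such a system exists iff
`m ≤ n`: a tree is oriented away from a root, and one extra edge on a cycle is sent to that root.
Finally `m ≤ n` means at most one cycle, because deleting an edge of a cycle leaves a connected
graph, which is a tree exactly when `m ≤ n`. So if `m ≤ n`, every cycle contains every edge of any
other cycle, and if `m > n`, some cycle survives the deletion of an edge of another one.
-/

open SimpleGraph Function

namespace SimpleGraph

variable {V : Type*} {G H : SimpleGraph V}

namespace Subgraph.IsCycleSubgraph

variable {C : G.Subgraph}

lemma exists_adj (hC : C.IsCycleSubgraph) {v : V} (hv : v ∈ C.verts) : ∃ w, C.Adj v w :=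
  Set.nonempty_of_ncard_ne_zero (s := C.neighborSet v) (by rw [hC.2 v hv]; decide)

lemma isCycles_spanningCoe (hC : C.IsCycleSubgraph) : C.spanningCoe.IsCycles := by
  rintro v ⟨w, hw⟩
  have hv : v ∈ C.verts := C.edge_vert hw
  rw [← hC.2 v hv]
  rfl

lemma not_isBridge [Finite V] (hC : C.IsCycleSubgraph) (hle : C.spanningCoe ≤ H) {x y : V}
    (hxy : C.Adj x y) : ¬ H.IsBridge s(x, y) := by
  rw [isBridge_iff, not_not]
  exact (hC.isCycles_spanningCoe.reachable_deleteEdges hxy).mono (deleteEdges_mono hle)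

lemma not_isAcyclic [Finite V] (hC : C.IsCycleSubgraph) (hle : C.spanningCoe ≤ H) :
    ¬ H.IsAcyclic := by
  obtain ⟨v, hv⟩ := hC.1.nonempty
  obtain ⟨w, hvw⟩ := hC.exists_adj hv
  rw [isAcyclic_iff_forall_adj_isBridge]
  exact fun h ↦ hC.not_isBridge hle hvw (h (hle hvw))

lemma eq_of_edgeSet_eq {C' : G.Subgraph} (hC : C.IsCycleSubgraph) (hC' : C'.IsCycleSubgraph)
    (h : C.edgeSet = C'.edgeSet) : C = C' := by
  have hadj (v w : V) : C.Adj v w ↔ C'.Adj v w := by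
    rw [← Subgraph.mem_edgeSet, h, Subgraph.mem_edgeSet]
  refine Subgraph.ext (Set.ext fun v ↦ ⟨fun hv ↦ ?_, fun hv ↦ ?_⟩)
    (funext₂ fun v w ↦ propext (hadj v w))
  · obtain ⟨w, hvw⟩ := hC.exists_adj hv
    exact C'.edge_vert ((hadj v w).mp hvw)
  · obtain ⟨w, hvw⟩ := hC'.exists_adj hv
    exact C.edge_vert ((hadj v w).mpr hvw)

end Subgraph.IsCycleSubgraph

lemma Walk.IsCycle.isCycleSubgraph_toSubgraph {u : V} {c : G.Walk u u} (hc : c.IsCycle) :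
    c.toSubgraph.IsCycleSubgraph :=
  ⟨c.toSubgraph_connected, fun _ hv ↦ hc.ncard_neighborSet_toSubgraph_eq_two
    (c.mem_verts_toSubgraph.mp hv)⟩

lemma card_edgeSet_deleteEdges_add_one [Finite V] {x y : V} (hxy : G.Adj x y) :
    Nat.card (G.deleteEdges {s(x, y)}).edgeSet + 1 = Nat.card G.edgeSet := by
  simp only [edgeSet_deleteEdges, Nat.card_coe_set_eq]
  exact Set.ncard_sdiff_singleton_add_one hxy

lemma Connected.isTree_deleteEdges_iff [Finite V] (hG : G.Connected) {x y : V} (hxy : G.Adj x y)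
    (hbr : ¬ G.IsBridge s(x, y)) :
    (G.deleteEdges {s(x, y)}).IsTree ↔ Nat.card G.edgeSet ≤ Nat.card V := by
  have hG' := hG.connected_delete_edge_of_not_isBridge hbr
  have hcard := card_edgeSet_deleteEdges_add_one hxy
  have := hG'.card_vert_le_card_edgeSet_add_one
  rw [isTree_iff_connected_and_card, and_iff_right hG']
  omega

namespace Subgraph.IsCycleSubgraph

variable {C C' : G.Subgraph}

lemma edgeSet_subset_of_card_edgeSet_le [Finite V] (hG : G.Connected)
    (hcard : Nat.card G.edgeSet ≤ Nat.card V) (hC : C.IsCycleSubgraph)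
    (hC' : C'.IsCycleSubgraph) : C.edgeSet ⊆ C'.edgeSet := by
  intro e he
  induction e with | h x y => ?_
  by_contra he'
  have hbr := hC.not_isBridge C.spanningCoe_le he
  have hle : C'.spanningCoe ≤ G.deleteEdges {s(x, y)} := by
    intro a b hab
    rw [SimpleGraph.deleteEdges_adj, Set.mem_singleton_iff]
    exact ⟨C'.adj_sub hab, fun h ↦ he' (h ▸ hab)⟩
  exact hC'.not_isAcyclic hle ((hG.isTree_deleteEdges_iff (C.adj_sub he) hbr).mpr hcard).2

end Subgraph.IsCycleSubgraph

theorem Connected.cycleSubgraphs_subsingleton_iff [Finite V] (hG : G.Connected) :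
    {C : G.Subgraph | C.IsCycleSubgraph}.Subsingleton ↔ Nat.card G.edgeSet ≤ Nat.card V := by
  refine ⟨fun hsub ↦ ?_, fun hcard C hC C' hC' ↦
    hC.eq_of_edgeSet_eq hC' ((hC.edgeSet_subset_of_card_edgeSet_le hG hcard hC').antisymm
      (hC'.edgeSet_subset_of_card_edgeSet_le hG hcard hC))⟩
  by_contra! hcard
  obtain ⟨x, y, hxy, hbr⟩ : ∃ x y, G.Adj x y ∧ ¬ G.IsBridge s(x, y) := by
    have hac : ¬ G.IsAcyclic := fun h ↦ by
      have := (isTree_iff_connected_and_card.mp ⟨hG, h⟩).2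
      omega
    simpa [isAcyclic_iff_forall_adj_isBridge] using hac
  obtain ⟨u, c, hc, he⟩ := adj_and_reachable_delete_edges_iff_exists_cycle.mp
    ⟨hxy, by rwa [isBridge_iff, not_not] at hbr⟩
  have hac' : ¬ (G.deleteEdges {s(x, y)}).IsAcyclic := fun h ↦
    (hG.isTree_deleteEdges_iff hxy hbr).not.mpr hcard.not_ge
      ⟨hG.connected_delete_edge_of_not_isBridge hbr, h⟩
  obtain ⟨v, c', hc'⟩ : ∃ v, ∃ c' : (G.deleteEdges {s(x, y)}).Walk v v, c'.IsCycle := by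
    simpa [IsAcyclic] using hac'
  have hcc' := hsub hc.isCycleSubgraph_toSubgraph
    (hc'.mapLe (deleteEdges_le _)).isCycleSubgraph_toSubgraph
  have he' : s(x, y) ∈ c'.edges := by
    rwa [← Walk.edges_mapLe_eq_edges (deleteEdges_le _), ← Walk.mem_edges_toSubgraph, ← hcc',
      Walk.mem_edges_toSubgraph]
  simpa using c'.edges_subset_edgeSet he'

/-- A system of distinct representatives of the edges by their endpoints; equivalently, a
matching of `subdivision G` covering all the vertices that come from edges. -/
def HasEndpointSDR (G : SimpleGraph V) : Prop :=
  ∃ f : G.edgeSet → V, Injective f ∧ ∀ e : G.edgeSet, f e ∈ (e : Sym2 V)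

lemma IsTree.eq_of_adj_of_dist_eq_add_one (hG : G.IsTree) (r : V) {v w w' : V}
    (hw : G.Adj v w) (hw' : G.Adj v w') (h : G.dist r v = G.dist r w + 1)
    (h' : G.dist r v = G.dist r w' + 1) : w = w' := by
  classical
  obtain ⟨P, hP, -⟩ := hG.connected.exists_path_of_dist r v
  have key : ∀ {w}, G.Adj v w → G.dist r v = G.dist r w + 1 → w = P.penultimate := by
    intro w hw h
    refine hG.isAcyclic.eq_penultimate_of_adj_end hP hw ?_
    by_contra hwP
    obtain ⟨q, hq, hqlen⟩ := hG.connected.exists_path_of_dist r w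
    have hv : v ∈ q.support :=
      hG.isAcyclic.mem_support_of_ne_mem_support_of_adj_of_isPath hq hP hw.symm hwP
    have := (dist_le (q.takeUntil v hv)).trans (q.length_takeUntil_le_length hv)
    omega
  rw [key hw h, key hw' h']

lemma IsTree.exists_injective_endpoint_ne (hG : G.IsTree) (r : V) :
    ∃ f : G.edgeSet → V, Injective f ∧ (∀ e : G.edgeSet, f e ∈ (e : Sym2 V)) ∧
      ∀ e, f e ≠ r := by
  -- each edge is sent to its endpoint farther from `r`
  have : ∀ e : G.edgeSet, ∃ v w, (e : Sym2 V) = s(v, w) ∧ G.dist r v = G.dist r w + 1 := by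
    rintro ⟨⟨x, y⟩, hxy⟩
    rcases hG.dist_eq_dist_add_one_of_adj r hxy with h | h
    · exact ⟨x, y, rfl, h⟩
    · exact ⟨y, x, Sym2.eq_swap, h⟩
  choose f g hfg hdist using this
  have hadj (e : G.edgeSet) : G.Adj (f e) (g e) := by
    rw [← mem_edgeSet, ← hfg]
    exact e.2
  refine ⟨f, fun e e' hee' ↦ ?_, fun e ↦ hfg e ▸ Sym2.mem_mk_left _ _, fun e he ↦ ?_⟩
  · have hg := hG.eq_of_adj_of_dist_eq_add_one r (hadj e) (hee' ▸ hadj e') (hdist e)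
      (hee' ▸ hdist e')
    exact Subtype.ext (by rw [hfg, hfg, hee', hg])
  · have := hdist e
    rw [he, dist_self] at this
    omega

theorem Connected.hasEndpointSDR_iff [Finite V] (hG : G.Connected) :
    G.HasEndpointSDR ↔ Nat.card G.edgeSet ≤ Nat.card V := by
  refine ⟨fun ⟨f, hf, _⟩ ↦ Nat.card_le_card_of_injective f hf, fun hcard ↦ ?_⟩
  by_cases hac : G.IsAcyclic
  · obtain ⟨f, hf, hfe, -⟩ := IsTree.exists_injective_endpoint_ne ⟨hG, hac⟩ hG.nonempty.some
    exact ⟨f, hf, hfe⟩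
  -- otherwise delete an edge `s(x, y)` of a cycle: what is left is a tree, oriented away from `x`
  obtain ⟨x, y, hxy, hbr⟩ : ∃ x y, G.Adj x y ∧ ¬ G.IsBridge s(x, y) := by
    simpa [isAcyclic_iff_forall_adj_isBridge] using hac
  obtain ⟨f, hf, hfe, hfx⟩ :=
    ((hG.isTree_deleteEdges_iff hxy hbr).mpr hcard).exists_injective_endpoint_ne x
  have hmem (e : G.edgeSet) (he : (e : Sym2 V) ≠ s(x, y)) :
      (e : Sym2 V) ∈ (G.deleteEdges {s(x, y)}).edgeSet := by
    rw [edgeSet_deleteEdges]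
    exact ⟨e.2, he⟩
  classical
  refine ⟨fun e ↦ if he : (e : Sym2 V) = s(x, y) then x else f ⟨e, hmem e he⟩, ?_, ?_⟩
  · intro e e' hee'
    by_cases he : (e : Sym2 V) = s(x, y) <;> by_cases he' : (e' : Sym2 V) = s(x, y) <;>
      simp only [he, he', dite_true, dite_false] at hee'
    · exact Subtype.ext (he.trans he'.symm)
    · exact absurd hee'.symm (hfx _)
    · exact absurd hee' (hfx _)
    · exact Subtype.ext (Subtype.mk.inj (hf hee'))
  · intro e
    by_cases he : (e : Sym2 V) = s(x, y)
    · simp only [he, dite_true]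
      exact Sym2.mem_mk_left _ _
    · simpa only [he, dite_false] using hfe ⟨e, hmem e he⟩

lemma hasEndpointSDR_iff_exists_surjective (hinc : ∀ v, ∃ e : G.edgeSet, v ∈ (e : Sym2 V)) :
    G.HasEndpointSDR ↔ ∃ g : V → G.edgeSet, Surjective g ∧ ∀ v, v ∈ (g v : Sym2 V) := by
  classical
  refine ⟨fun ⟨f, hf, hfe⟩ ↦ ?_, fun ⟨g, hg, hgv⟩ ↦ ⟨surjInv hg, injective_surjInv hg,
    fun e ↦ by simpa only [surjInv_eq hg e] using hgv (surjInv hg e)⟩⟩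
  choose inc hinc using hinc
  refine ⟨fun v ↦ if hv : v ∈ Set.range f then hv.choose else inc v, fun e ↦ ⟨f e, ?_⟩,
    fun v ↦ ?_⟩
  · have hv : f e ∈ Set.range f := ⟨e, rfl⟩
    simpa only [hv, dite_true] using hf hv.choose_spec
  · dsimp only
    split_ifs with hv
    · simpa only [hv.choose_spec] using hfe hv.choose
    · exact hinc v

end SimpleGraph

lemma injective_of_mem_of_pairwise_disjoint {α : Type*} {M : Set (Sym2 α)}
    (hM : ∀ e ∈ M, ∀ f ∈ M, e ≠ f → ∀ x, ¬ (x ∈ e ∧ x ∈ f)) {p : M → α}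
    (hp : ∀ x : M, p x ∈ (x : Sym2 α)) : Injective p := fun x y hxy ↦
  by_contra fun hne ↦ hM x x.2 y y.2 (fun h ↦ hne (Subtype.ext h)) (p x) ⟨hp x, hxy ▸ hp y⟩

namespace subdivision

open Sum

variable {V : Type*} {G : SimpleGraph V} {x : Sym2 (V ⊕ G.edgeSet)}

lemma exists_eq_of_mem_edgeSet (hx : x ∈ (subdivision G).edgeSet) :
    ∃ (v : V) (e : G.edgeSet), v ∈ (e : Sym2 V) ∧ x = s(inl v, inr e) := by
  obtain ⟨a, b⟩ := x
  rcases a with v | e <;> rcases b with w | f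
  · exact absurd hx id
  · exact ⟨v, f, hx, rfl⟩
  · exact ⟨w, e, hx, Sym2.eq_swap⟩
  · exact absurd hx id

lemma exists_inl_mem (hx : x ∈ (subdivision G).edgeSet) : ∃ v, inl v ∈ x := by
  obtain ⟨v, e, -, rfl⟩ := exists_eq_of_mem_edgeSet hx
  exact ⟨v, Sym2.mem_mk_left _ _⟩

lemma exists_inr_mem (hx : x ∈ (subdivision G).edgeSet) : ∃ e, inr e ∈ x := by
  obtain ⟨v, e, -, rfl⟩ := exists_eq_of_mem_edgeSet hx
  exact ⟨e, Sym2.mem_mk_right _ _⟩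

lemma eq_of_inl_mem (hx : x ∈ (subdivision G).edgeSet) {v w : V} (hv : inl v ∈ x)
    (hw : inl w ∈ x) : v = w := by
  obtain ⟨u, e, -, rfl⟩ := exists_eq_of_mem_edgeSet hx
  simp_all

lemma eq_of_inr_mem (hx : x ∈ (subdivision G).edgeSet) {e f : G.edgeSet} (he : inr e ∈ x)
    (hf : inr f ∈ x) : e = f := by
  obtain ⟨u, d, -, rfl⟩ := exists_eq_of_mem_edgeSet hx
  simp_all

lemma mem_of_inl_mem_of_inr_mem (hx : x ∈ (subdivision G).edgeSet) {v : V} {e : G.edgeSet}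
    (hv : inl v ∈ x) (he : inr e ∈ x) : v ∈ (e : Sym2 V) := by
  obtain ⟨u, d, hud, rfl⟩ := exists_eq_of_mem_edgeSet hx
  simp_all

theorem isGreatest_matching_iff [Finite V] :
    IsGreatest {k : ℕ | ∃ M : Set (Sym2 (V ⊕ G.edgeSet)),
        M ⊆ (subdivision G).edgeSet ∧
        (∀ e ∈ M, ∀ f ∈ M, e ≠ f → ∀ x, ¬ (x ∈ e ∧ x ∈ f)) ∧
        M.ncard = k}
      G.edgeSet.ncard ↔ G.HasEndpointSDR := by
  constructor
  · rintro ⟨⟨M, hsub, hdisj, hcard⟩, -⟩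
    choose vtx hvtx using fun x : M ↦ exists_inl_mem (hsub x.2)
    choose edg hedg using fun x : M ↦ exists_inr_mem (hsub x.2)
    have hvtx_inj : Injective vtx :=
      (injective_of_mem_of_pairwise_disjoint hdisj (p := inl ∘ vtx) hvtx).of_comp
    have hedg_inj : Injective edg :=
      (injective_of_mem_of_pairwise_disjoint hdisj (p := inr ∘ edg) hedg).of_comp
    have hedg_bij : Bijective edg :=
      hedg_inj.bijective_of_nat_card_le (by rw [Nat.card_coe_set_eq, Nat.card_coe_set_eq, hcard])
    refine ⟨vtx ∘ surjInv hedg_bij.2, hvtx_inj.comp (injective_surjInv _), fun e ↦ ?_⟩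
    have he := hedg (surjInv hedg_bij.2 e)
    rw [surjInv_eq hedg_bij.2] at he
    exact mem_of_inl_mem_of_inr_mem (hsub (surjInv hedg_bij.2 e).2) (hvtx _) he
  · rintro ⟨f, hf, hfe⟩
    have hinj : Injective fun e ↦ s(inl (f e), inr e) := fun e e' h ↦ by simp_all
    refine ⟨⟨_, ?_, ?_, Set.ncard_range_of_injective hinj⟩, ?_⟩
    · rintro _ ⟨e, rfl⟩
      exact hfe e
    · rintro _ ⟨e, rfl⟩ _ ⟨e', rfl⟩ hne z ⟨hz, hz'⟩
      obtain rfl : e = e' := by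
        rcases Sym2.mem_iff.mp hz with rfl | rfl <;> simp_all [hf.eq_iff]
      exact hne rfl
    · rintro k ⟨M, hsub, hdisj, rfl⟩
      choose edg hedg using fun x : M ↦ exists_inr_mem (hsub x.2)
      exact Nat.card_le_card_of_injective _
        (injective_of_mem_of_pairwise_disjoint hdisj (p := inr ∘ edg) hedg).of_comp

theorem isLeast_cover_iff [Finite V] :
    IsLeast {k : ℕ | ∃ A : Set (Sym2 (V ⊕ G.edgeSet)),
        A ⊆ (subdivision G).edgeSet ∧
        (∀ x : V ⊕ G.edgeSet, ∃ e ∈ A, x ∈ e) ∧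
        A.ncard = k}
      (Nat.card V) ↔ ∃ g : V → G.edgeSet, Surjective g ∧ ∀ v, v ∈ (g v : Sym2 V) := by
  have hcover_inj {A : Set (Sym2 (V ⊕ G.edgeSet))} (hsub : A ⊆ (subdivision G).edgeSet) {κ : V → _}
      (hκA : ∀ v, κ v ∈ A) (hκ : ∀ v, inl v ∈ κ v) : Injective (Set.codRestrict κ A hκA) :=
    (Set.injective_codRestrict hκA).mpr fun v w h ↦ eq_of_inl_mem (hsub (hκA v)) (hκ v) (h ▸ hκ w)
  constructor
  · rintro ⟨⟨A, hsub, hcov, hcard⟩, -⟩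
    choose κ hκA hκ using fun v ↦ hcov (inl v)
    let κ' : V → A := Set.codRestrict κ A hκA
    have hκ'_bij : Bijective κ' :=
      (hcover_inj hsub hκA hκ).bijective_of_nat_card_le (by rw [Nat.card_coe_set_eq, hcard])
    choose edg hedg using fun a : A ↦ exists_inr_mem (hsub a.2)
    refine ⟨edg ∘ κ', fun e ↦ ?_,
      fun v ↦ mem_of_inl_mem_of_inr_mem (hsub (hκA v)) (hκ v) (hedg _)⟩
    obtain ⟨a, haA, hea⟩ := hcov (inr e)
    obtain ⟨v, hv⟩ := hκ'_bij.2 ⟨a, haA⟩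
    refine ⟨v, eq_of_inr_mem (hsub haA) ?_ hea⟩
    have ha : (κ' v : Sym2 (V ⊕ G.edgeSet)) = a := congrArg Subtype.val hv
    exact ha ▸ hedg (κ' v)
  · rintro ⟨g, hg, hgv⟩
    have hinj : Injective fun v ↦ s(inl v, inr (g v)) := fun v w h ↦ by simp_all
    refine ⟨⟨_, ?_, ?_, Set.ncard_range_of_injective hinj⟩, ?_⟩
    · rintro _ ⟨v, rfl⟩
      exact hgv v
    · rintro (v | e)
      · exact ⟨_, ⟨v, rfl⟩, Sym2.mem_mk_left _ _⟩
      · obtain ⟨v, rfl⟩ := hg e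
        exact ⟨_, ⟨v, rfl⟩, Sym2.mem_mk_right _ _⟩
    · rintro k ⟨A, hsub, hcov, rfl⟩
      choose κ hκA hκ using fun v ↦ hcov (inl v)
      exact Nat.card_le_card_of_injective _ (hcover_inj hsub hκA hκ)

end subdivision

/-- For a finite connected simple graph `G` of order `n ≥ 2` and size `m`,
the following are equivalent: (i) `G` contains at most one cycle;
(ii) `β(S(G)) = |S| = m`; (iii) `ρ(S(G)) = |V| = n`. -/
theorem atMostOneCycle_tfae_matching {V : Type*} [Fintype V] (G : SimpleGraph V)
    (hconn : G.Connected) (hn : 2 ≤ Fintype.card V) :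
    List.TFAE
      [ {H : G.Subgraph | H.IsCycleSubgraph}.Subsingleton,
        IsGreatest {k : ℕ | ∃ M : Set (Sym2 (V ⊕ G.edgeSet)),
            M ⊆ (subdivision G).edgeSet ∧
            (∀ e ∈ M, ∀ f ∈ M, e ≠ f → ∀ x, ¬ (x ∈ e ∧ x ∈ f)) ∧
            M.ncard = k}
          G.edgeSet.ncard,
        IsLeast {k : ℕ | ∃ A : Set (Sym2 (V ⊕ G.edgeSet)),
            A ⊆ (subdivision G).edgeSet ∧
            (∀ x : V ⊕ G.edgeSet, ∃ e ∈ A, x ∈ e) ∧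
            A.ncard = k}
          (Fintype.card V) ] := by
  have : Nontrivial V := Fintype.one_lt_card_iff_nontrivial.mp hn
  have hinc (v : V) : ∃ e : G.edgeSet, v ∈ (e : Sym2 V) :=
    let ⟨u, hvu⟩ := hconn.preconnected.exists_adj_of_nontrivial v
    ⟨⟨s(v, u), hvu⟩, Sym2.mem_mk_left _ _⟩
  rw [← Nat.card_eq_fintype_card]
  tfae_have 1 ↔ 2 := hconn.cycleSubgraphs_subsingleton_iff.trans
    (hconn.hasEndpointSDR_iff.symm.trans subdivision.isGreatest_matching_iff.symm)
  tfae_have 2 ↔ 3 := subdivision.isGreatest_matching_iff.trans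
    ((hasEndpointSDR_iff_exists_surjective hinc).trans subdivision.isLeast_cover_iff.symm)
  tfae_finish
end

section
/- Let G be a finite simple graph with subdivision graph S(G). If D is a differential set of S(G) (i.e., a set of vertices of S(G) with ∂(D) = ∂(S(G))), then D is an independent set of S(G). -/
/-- `B(D)`: the set of vertices outside `D` that have a neighbour in `D`. -/
def extBoundary {W : Type*} (H : SimpleGraph W) (D : Set W) : Set W :=
  {v | v ∉ D ∧ ∃ u ∈ D, H.Adj u v}

/-- The differential of a set of vertices: `∂(D) = |B(D)| - |D|`. -/
noncomputable def setDifferential {W : Type*} (H : SimpleGraph W) (D : Set W) : ℤ :=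
  ((extBoundary H D).ncard : ℤ) - (D.ncard : ℤ)

/-- The differential of a graph: `∂(H) = max {∂(D) : D ⊆ V(H)}`. -/
noncomputable def graphDifferential {W : Type*} (H : SimpleGraph W) : ℤ :=
  sSup {x : ℤ | ∃ D : Set W, x = setDifferential H D}


/-
Let `x ∈ D` be a vertex of degree at most two with a neighbour `y ∈ D`. Removing `x` from `D`
shrinks `D` by one, and the boundary loses at most the one neighbour of `x` other than `y` but
gains `x` itself, which is still dominated by `y`; so the differential strictly increases.
In `S(G)` every edge-vertex has degree two and every edge of `S(G)` joins a vertex to an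
edge-vertex, so a differential set of `S(G)` contains no edge of `S(G)`.
-/

namespace SimpleGraph

variable {W : Type*} (H : SimpleGraph W)

theorem setDifferential_le_graphDifferential [Finite W] (D : Set W) :
    setDifferential H D ≤ graphDifferential H :=
  le_csSup ((Set.finite_range (setDifferential H)).subset
    (by rintro _ ⟨E, rfl⟩; exact ⟨E, rfl⟩)).bddAbove ⟨D, rfl⟩

variable {H}

theorem insert_extBoundary_diff_neighborSet_subset {D : Set W} {x y : W} (hy : y ∈ D)
    (hxy : H.Adj x y) :
    insert x (extBoundary H D \ H.neighborSet x) ⊆ extBoundary H (D \ {x}) := by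
  rintro w (rfl | ⟨⟨hwD, u, huD, huw⟩, hxw⟩)
  · exact ⟨fun h => h.2 rfl, y, ⟨hy, hxy.ne'⟩, hxy.symm⟩
  · refine ⟨fun h => hwD h.1, u, ⟨huD, ?_⟩, huw⟩
    rintro rfl
    exact hxw huw

theorem setDifferential_lt_diff_singleton [Finite W] {D : Set W} {x y : W} (hx : x ∈ D)
    (hy : y ∈ D) (hxy : H.Adj x y) (hdeg : (H.neighborSet x).ncard ≤ 2) :
    setDifferential H D < setDifferential H (D \ {x}) := by
  have hD : (D \ {x}).ncard + 1 = D.ncard := Set.ncard_sdiff_singleton_add_one hx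
  have hlost : (H.neighborSet x \ D).ncard ≤ 1 := by
    have hsub : H.neighborSet x \ D ⊆ H.neighborSet x \ {y} :=
      Set.sdiff_subset_sdiff_right (Set.singleton_subset_iff.mpr hy)
    have := Set.ncard_sdiff_singleton_of_mem (s := H.neighborSet x) hxy
    have := Set.ncard_le_ncard hsub
    omega
  have hB : (extBoundary H D).ncard ≤ (extBoundary H D \ H.neighborSet x).ncard + 1 := by
    have hsub : extBoundary H D \ (H.neighborSet x \ D) ⊆ extBoundary H D \ H.neighborSet x :=
      fun w ⟨hwB, hw⟩ => ⟨hwB, fun hxw => hw ⟨hxw, hwB.1⟩⟩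
    have := Set.ncard_le_ncard_sdiff_add_ncard (extBoundary H D) (H.neighborSet x \ D)
    have := Set.ncard_le_ncard hsub
    omega
  have hB' : (extBoundary H D \ H.neighborSet x).ncard + 1 ≤ (extBoundary H (D \ {x})).ncard := by
    rw [← Set.ncard_insert_of_notMem fun h => h.1.1 hx]
    exact Set.ncard_le_ncard (insert_extBoundary_diff_neighborSet_subset hy hxy)
  unfold setDifferential
  omega

theorem subdivision_neighborSet_inr_ncard_le {V : Type*} (G : SimpleGraph V) (e : G.edgeSet) :
    ((subdivision G).neighborSet (Sum.inr e)).ncard ≤ 2 := by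
  obtain ⟨⟨a, b⟩, he⟩ := e
  calc ((subdivision G).neighborSet (Sum.inr ⟨s(a, b), he⟩)).ncard
      ≤ ({Sum.inl a, Sum.inl b} : Set (V ⊕ G.edgeSet)).ncard := by
        refine Set.ncard_le_ncard ?_
        rintro (v | f) hv
        · simpa [subdivision] using hv
        · exact hv.elim
    _ ≤ 2 := (Set.ncard_insert_le _ _).trans (by simp)

end SimpleGraph

/-- If `D` is a differential set of `S(G)` (a set of vertices with
`∂(D) = ∂(S(G))`), then `D` is an independent set of `S(G)`. -/
theorem differentialSet_subdivision_indep {V : Type*} [Fintype V] (G : SimpleGraph V)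
    (D : Set (V ⊕ G.edgeSet))
    (hD : setDifferential (subdivision G) D = graphDifferential (subdivision G)) :
    ∀ a ∈ D, ∀ b ∈ D, ¬ (subdivision G).Adj a b := by
  have hedge : ∀ e : G.edgeSet, ∀ a ∈ D, Sum.inr e ∈ D → ¬ (subdivision G).Adj (Sum.inr e) a :=
    fun e a ha he hadj =>
      (SimpleGraph.setDifferential_lt_diff_singleton he ha hadj
        (SimpleGraph.subdivision_neighborSet_inr_ncard_le G e)).not_ge
        (hD ▸ SimpleGraph.setDifferential_le_graphDifferential _ _)
  rintro (v | e) ha (w | f) hb hadj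
  · exact hadj
  · exact hedge f _ ha hb hadj.symm
  · exact hedge e _ hb ha hadj
  · exact hadj
end

section
/- Let G be a finite simple graph with subdivision graph S(G). For every set D ⊆ V(G) (viewed also as a set of vertices of S(G) via the inclusion of V(G) into the vertex set of S(G)), one has |B_G(D)| ≤ |B_{S(G)}(D)|, where B_H(D) denotes the external boundary of D in the graph H. -/
theorem Sym2.eq_of_mk_eq_mk_of_ne {α : Type*} {a b v w : α} (h : s(a, v) = s(b, w))
    (hvb : v ≠ b) : v = w := by
  rcases Sym2.eq_iff.mp h with ⟨-, hvw⟩ | ⟨-, hvb'⟩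
  · exact hvw
  · exact absurd hvb' hvb

theorem edge_mem_extBoundary_subdivision {V : Type*} {G : SimpleGraph V} {D : Set V} {u v : V}
    (hu : u ∈ D) (huv : G.Adj u v) :
    Sum.inr ⟨s(u, v), huv⟩ ∈ extBoundary (subdivision G) (Sum.inl '' D) :=
  ⟨fun ⟨_, _, h⟩ => Sum.inl_ne_inr h, Sum.inl u, Set.mem_image_of_mem _ hu, Sym2.mem_mk_left u v⟩

-- Each `v ∈ B_G(D)` goes to the edge `uv` towards a chosen neighbour `u ∈ D`; since `v ∉ D`,
-- `v` is recovered as the endpoint of that edge outside `D`.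
/-- For every `D ⊆ V(G)`, viewed in `S(G)` via the inclusion of `V(G)` into
the vertex set of `S(G)`, one has `|B_G(D)| ≤ |B_{S(G)}(D)|`. -/
theorem extBoundary_le_subdivision {V : Type*} [Fintype V] (G : SimpleGraph V)
    (D : Set V) :
    (extBoundary G D).ncard ≤ (extBoundary (subdivision G) (Sum.inl '' D)).ncard := by
  choose u hu hadj using fun v : extBoundary G D => v.2.2
  let f : extBoundary G D → extBoundary (subdivision G) (Sum.inl '' D) := fun v =>
    ⟨Sum.inr ⟨s(u v, v), hadj v⟩, edge_mem_extBoundary_subdivision (hu v) (hadj v)⟩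
  have hf : f.Injective := fun v w hvw => by
    have hedge : s(u v, v.1) = s(u w, w.1) :=
      congrArg Subtype.val (Sum.inr_injective (congrArg Subtype.val hvw))
    exact Subtype.ext <| Sym2.eq_of_mk_eq_mk_of_ne hedge fun h => v.2.1 (h ▸ hu w)
  exact Nat.card_le_card_of_injective f hf
end
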